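/- Let b ∈ (0, +∞] and let (H, φ) solve the EdGB FLRW system on [0, b) with the negative-branch initial data with parameter β. Then for all t ∈ (0, b) the scalar field satisfies −(12β^2 + 2√6)·ln((1/2)βt + 1) < φ(t) < −ln(1 + (3/5)·(β^2 − 1/(5t + 1/β)^2)). -/

import Mathlib

/-- The EdGB FLRW system on a set `I ⊆ ℝ`: `H` is continuously differentiable and
`φ` twice continuously differentiable on `I`, and for every `t ∈ I` the Hamiltonian
constraint `3H² − 3e^φ φ' H³ = φ'²/2` and the scalar field equation
`φ'' = −3Hφ' − 3e^φ H²(H² + H')` hold. -/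
def EdGB (H φ : ℝ → ℝ) (I : Set ℝ) : Prop :=
  ContDiffOn ℝ 1 H I ∧ ContDiffOn ℝ 2 φ I ∧
  (∀ t ∈ I, 3 * H t ^ 2 - 3 * Real.exp (φ t) * deriv φ t * H t ^ 3 = (deriv φ t) ^ 2 / 2) ∧
  (∀ t ∈ I, deriv (deriv φ) t =
      -3 * H t * deriv φ t - 3 * Real.exp (φ t) * H t ^ 2 * (H t ^ 2 + deriv H t))

/-- The negative-branch initial data with parameter `β`:
`H(0) = β`, `φ(0) = 0`, `φ'(0) = −3β³ − √(9β⁶ + 6β²)`, with `0 < β < √6/6`. -/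
def NegBranchData (H φ : ℝ → ℝ) (β : ℝ) : Prop :=
  0 < β ∧ β < Real.sqrt 6 / 6 ∧ H 0 = β ∧ φ 0 = 0 ∧
  deriv φ 0 = -3 * β ^ 3 - Real.sqrt (9 * β ^ 6 + 6 * β ^ 2)

/-!
On the negative branch the Hamiltonian constraint, a quadratic in `φ'`, gives
`φ' + 3e^φH³ = -√(9e^{2φ}H⁶ + 6H²)`, so `-6e^φH³ - √6 H < φ' < -6e^φH³` as long as `H > 0`.
Differentiating the constraint and eliminating `φ''` with the scalar field equation expresses
`H'` algebraically; as long as moreover `e^φH² ≤ 1/6` this yields `-4H² ≤ H' ≤ -3H²/2`,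
hence `(β⁻¹ + 4t)⁻¹ ≤ H ≤ (β⁻¹ + 3t/2)⁻¹`, while `φ' < 0` gives `φ ≤ 0` and so `e^φH² ≤ β² < 1/6`.
These a priori bounds improve on the assumptions they need, so a continuity argument makes them
hold on all of `[0, b)`. The lower bound on `φ` then comes from integrating
`φ' > -(6β² + √6)H`, the upper one from integrating `(e^{-φ})' = -φ'e^{-φ} > 6H³`.
-/

open Set Real Filter Topology

lemma sqrt_six_lt : √6 < 5 / 2 := by
  rw [sqrt_lt' (by norm_num)]; norm_num

lemma sq_lt_one_sixth {β : ℝ} (hβ : 0 < β) (hβ6 : β < √6 / 6) : β ^ 2 < 1 / 6 := by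
  have : (√6 / 6) ^ 2 = 1 / 6 := by rw [div_pow, sq_sqrt (by norm_num)]; norm_num
  nlinarith

lemma neg_root_bounds {x E a : ℝ} (hE : 0 < E) (ha : 0 < a)
    (hcon : 3 * a ^ 2 - 3 * E * x * a ^ 3 = x ^ 2 / 2) (hneg : x + 3 * E * a ^ 3 < 0) :
    -6 * E * a ^ 3 - √6 * a < x ∧ x < -6 * E * a ^ 3 := by
  have h6 : √6 ^ 2 = 6 := sq_sqrt (by norm_num)
  have hsq : (x + 3 * E * a ^ 3) ^ 2 = (3 * E * a ^ 3) ^ 2 + 6 * a ^ 2 := by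
    linear_combination -2 * hcon
  have hEa : 0 < E * a ^ 3 := by positivity
  have hs : 0 < √6 * a := by positivity
  constructor
  · by_contra! hx
    nlinarith [mul_nonneg (by linarith : (0:ℝ) ≤ -(x + 3 * E * a ^ 3) - (3 * E * a ^ 3 + √6 * a))
      (by linarith : (0:ℝ) ≤ -(x + 3 * E * a ^ 3) + (3 * E * a ^ 3 + √6 * a)), mul_pos hEa hs]
  · nlinarith [pow_pos ha 2]

lemma bounds_of_differentiated_constraint {a E x y : ℝ} (ha : 0 < a) (hE : 0 < E)
    (hsmall : E * a ^ 2 ≤ 1 / 6) (hcon : 3 * a ^ 2 - 3 * E * x * a ^ 3 = x ^ 2 / 2)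
    (hx_lower : -6 * E * a ^ 3 - √6 * a < x) (hx_upper : x < -6 * E * a ^ 3)
    (hy : y * (6 * a + 9 * E ^ 2 * a ^ 5 - 6 * E * x * a ^ 2)
      = -(3 * a * x ^ 2 - 3 * E * x ^ 2 * a ^ 3 + 12 * E * a ^ 4 * x + 9 * E ^ 2 * a ^ 7)) :
    -4 * a ^ 2 ≤ y ∧ y ≤ -(3 / 2) * a ^ 2 := by
  set D := 6 * a + 9 * E ^ 2 * a ^ 5 - 6 * E * x * a ^ 2
  have hx0 : 0 ≤ -x := by nlinarith [pow_pos ha 3]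
  have hEa3 : 6 * E * a ^ 3 ≤ a := by nlinarith
  have hx : -(7 / 2) * a ≤ x := by nlinarith [sqrt_six_lt]
  have hD : 0 < D := by
    have : 0 ≤ E * a ^ 2 * -x := by positivity
    nlinarith [pow_pos ha 5, sq_nonneg E]
  have hE2 : E ^ 2 * a ^ 4 ≤ 1 / 36 := by nlinarith [mul_pos hE (pow_pos ha 2)]
  constructor
  · have key : 4 * a ^ 2 * D + y * D = 6 * a ^ 3 + 27 * E ^ 2 * a ^ 7 + 18 * E * a ^ 5
        + 18 * E * a ^ 4 * -x + 18 * E ^ 2 * a ^ 6 * -x := by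
      linear_combination hy + (6 * a - 6 * E * a ^ 3) * hcon
    have : 0 ≤ 4 * a ^ 2 * D + y * D := by rw [key]; positivity
    nlinarith
  · have key : -(3 / 2) * a ^ 2 * D - y * D = 9 * a ^ 3 + 3 * E * a ^ 4 * x
        - 18 * E * a ^ 5 + 18 * E ^ 2 * a ^ 6 * x - (9 / 2) * E ^ 2 * a ^ 7 := by
      linear_combination -hy - (6 * a - 6 * E * a ^ 3) * hcon
    have : 0 ≤ -(3 / 2) * a ^ 2 * D - y * D := by
      rw [key]
      nlinarith [mul_le_mul_of_nonneg_left hx (by positivity : (0:ℝ) ≤ E * a ^ 4),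
        mul_le_mul_of_nonneg_left hx (by positivity : (0:ℝ) ≤ E ^ 2 * a ^ 6),
        mul_le_mul_of_nonneg_right hsmall (pow_pos ha 3).le,
        mul_le_mul_of_nonneg_right hE2 (pow_pos ha 3).le, pow_pos ha 3]
    nlinarith

lemma mapsTo_Icc_of_bootstrap {α Y : Type*} [ConditionallyCompleteLinearOrder α]
    [TopologicalSpace α] [OrderTopology α] [DenselyOrdered α] [TopologicalSpace Y]
    {f : α → Y} {a b : α} {K U : Set Y} (hf : ContinuousOn f (Icc a b)) (hK : IsClosed K)
    (hU : IsOpen U) (hKU : K ⊆ U) (ha : f a ∈ U)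
    (hstep : ∀ u ∈ Icc a b, MapsTo f (Icc a u) U → f u ∈ K) : MapsTo f (Icc a b) U := by
  by_contra hbad
  set B := Icc a b ∩ f ⁻¹' Uᶜ
  have hB : IsClosed B := hf.preimage_isClosed_of_isClosed isClosed_Icc hU.isClosed_compl
  have hBne : B.Nonempty := by
    simp only [MapsTo, not_forall] at hbad
    obtain ⟨x, hx, hxU⟩ := hbad
    exact ⟨x, hx, hxU⟩
  have hBbdd : BddBelow B := ⟨a, fun x hx => hx.1.1⟩
  set τ := sInf B
  have hτ : τ ∈ B := hB.csInf_mem hBne hBbdd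
  have hbefore : ∀ u ∈ Ico a τ, f u ∈ K := fun u hu =>
    hstep u ⟨hu.1, hu.2.le.trans hτ.1.2⟩ fun v hv => by
      by_contra hvU
      exact (csInf_le hBbdd ⟨⟨hv.1, hv.2.trans (hu.2.le.trans hτ.1.2)⟩, hvU⟩).not_gt
        (hv.2.trans_lt hu.2)
  rcases hτ.1.1.eq_or_lt with hτa | hτa
  · exact hτ.2 (hτa ▸ ha)
  have hcl : τ ∈ closure (Ico a τ) := by
    rw [closure_Ico hτa.ne]; exact right_mem_Icc.2 hτa.le
  have hfτ := ((hf τ hτ.1).mono (Ico_subset_Icc_self.trans (Icc_subset_Icc_right hτ.1.2)))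
    |>.mem_closure_image hcl
  exact hτ.2 (hKU (hK.closure_subset_iff.2 (image_subset_iff.2 hbefore) hfτ))

lemma monotoneOn_Icc_of_hasDerivAt_nonneg {f f' : ℝ → ℝ} {a b : ℝ}
    (hf : ContinuousOn f (Icc a b)) (hf' : ∀ x ∈ Ioo a b, HasDerivAt f (f' x) x)
    (hf'₀ : ∀ x ∈ Ioo a b, 0 ≤ f' x) : MonotoneOn f (Icc a b) :=
  monotoneOn_of_hasDerivWithinAt_nonneg (convex_Icc a b) hf
    (by simpa only [interior_Icc] using fun x hx => (hf' x hx).hasDerivWithinAt)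
    (by simpa only [interior_Icc] using hf'₀)

lemma strictMonoOn_Icc_of_hasDerivAt_pos {f f' : ℝ → ℝ} {a b : ℝ}
    (hf : ContinuousOn f (Icc a b)) (hf' : ∀ x ∈ Ioo a b, HasDerivAt f (f' x) x)
    (hf'₀ : ∀ x ∈ Ioo a b, 0 < f' x) : StrictMonoOn f (Icc a b) :=
  strictMonoOn_of_hasDerivWithinAt_pos (convex_Icc a b) hf
    (by simpa only [interior_Icc] using fun x hx => (hf' x hx).hasDerivWithinAt)
    (by simpa only [interior_Icc] using hf'₀)

section Riccati

variable {f f' : ℝ → ℝ} {a b k : ℝ}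

lemma inv_le_inv_add_of_neg_mul_sq_le_deriv (hab : a ≤ b) (hf : ContinuousOn f (Icc a b))
    (hpos : ∀ x ∈ Icc a b, 0 < f x) (hf' : ∀ x ∈ Ioo a b, HasDerivAt f (f' x) x)
    (hk : ∀ x ∈ Ioo a b, -k * f x ^ 2 ≤ f' x) : (f b)⁻¹ ≤ (f a)⁻¹ + k * (b - a) := by
  have hmono : MonotoneOn (fun x => k * x - (f x)⁻¹) (Icc a b) := by
    refine monotoneOn_Icc_of_hasDerivAt_nonneg
      ((continuousOn_const.mul continuousOn_id).sub (hf.inv₀ fun x hx => (hpos x hx).ne'))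
      (fun x hx => ((hasDerivAt_id x).const_mul k).sub
        ((hf' x hx).inv (hpos x (Ioo_subset_Icc_self hx)).ne')) fun x hx => ?_
    have hfx := hpos x (Ioo_subset_Icc_self hx)
    have : -k ≤ f' x / f x ^ 2 := by rw [le_div_iff₀ (by positivity)]; exact hk x hx
    simp only [mul_one, neg_div, sub_neg_eq_add]
    linarith
  have := hmono (left_mem_Icc.2 hab) (right_mem_Icc.2 hab) hab
  simp only at this
  linarith

lemma inv_add_le_inv_of_deriv_le_neg_mul_sq (hab : a ≤ b) (hf : ContinuousOn f (Icc a b))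
    (hpos : ∀ x ∈ Icc a b, 0 < f x) (hf' : ∀ x ∈ Ioo a b, HasDerivAt f (f' x) x)
    (hk : ∀ x ∈ Ioo a b, f' x ≤ -k * f x ^ 2) : (f a)⁻¹ + k * (b - a) ≤ (f b)⁻¹ := by
  have hmono : MonotoneOn (fun x => (f x)⁻¹ - k * x) (Icc a b) := by
    refine monotoneOn_Icc_of_hasDerivAt_nonneg
      ((hf.inv₀ fun x hx => (hpos x hx).ne').sub (continuousOn_const.mul continuousOn_id))
      (fun x hx => ((hf' x hx).inv (hpos x (Ioo_subset_Icc_self hx)).ne').sub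
        ((hasDerivAt_id x).const_mul k)) fun x hx => ?_
    have hfx := hpos x (Ioo_subset_Icc_self hx)
    have : f' x / f x ^ 2 ≤ -k := by rw [div_le_iff₀ (by positivity)]; exact hk x hx
    simp only [mul_one, neg_div]
    linarith
  have := hmono (left_mem_Icc.2 hab) (right_mem_Icc.2 hab) hab
  simp only at this
  linarith

end Riccati

lemma continuousOn_deriv_of_contDiffOn {f : ℝ → ℝ} {s : Set ℝ} (hf : ContDiffOn ℝ 1 f s)
    (hs : UniqueDiffOn ℝ s) (hd : ∀ x ∈ s, DifferentiableAt ℝ f x) :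
    ContinuousOn (deriv f) s :=
  (hf.continuousOn_derivWithin hs le_rfl).congr fun x hx => ((hd x hx).derivWithin (hs x hx)).symm

namespace EdGB

variable {H φ : ℝ → ℝ} {s : Set ℝ} {c β t u : ℝ}

lemma mono (hsys : EdGB H φ s) {s' : Set ℝ} (hs' : s' ⊆ s) : EdGB H φ s' :=
  ⟨hsys.1.mono hs', hsys.2.1.mono hs', fun u hu => hsys.2.2.1 u (hs' hu),
    fun u hu => hsys.2.2.2 u (hs' hu)⟩

lemma hasDerivAt_H (hsys : EdGB H φ s) (hu : s ∈ 𝓝 u) : HasDerivAt H (deriv H u) u :=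
  ((hsys.1.differentiableOn one_ne_zero u (mem_of_mem_nhds hu)).differentiableAt hu).hasDerivAt

lemma hasDerivAt_φ (hsys : EdGB H φ s) (hu : s ∈ 𝓝 u) : HasDerivAt φ (deriv φ u) u :=
  ((hsys.2.1.differentiableOn two_ne_zero u (mem_of_mem_nhds hu)).differentiableAt hu).hasDerivAt

lemma hasDerivAt_deriv_φ (hsys : EdGB H φ s) (hu : s ∈ 𝓝 u) :
    HasDerivAt (deriv φ) (deriv (deriv φ) u) u := by
  have hC1 : ContDiffOn ℝ 1 (deriv φ) (interior s) :=
    (hsys.2.1.mono interior_subset).deriv_of_isOpen isOpen_interior (by norm_num)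
  have hu' : u ∈ interior s := mem_interior_iff_mem_nhds.2 hu
  exact ((hC1.differentiableOn one_ne_zero u hu').differentiableAt
    (isOpen_interior.mem_nhds hu')).hasDerivAt

/-- The time derivative of the Hamiltonian constraint, with `φ''` eliminated through the scalar
field equation. -/
lemma deriv_H_mul_eq (hsys : EdGB H φ s) (hu : s ∈ 𝓝 u) :
    deriv H u * (6 * H u + 9 * exp (φ u) ^ 2 * H u ^ 5
        - 6 * exp (φ u) * deriv φ u * H u ^ 2)
      = -(3 * H u * deriv φ u ^ 2 - 3 * exp (φ u) * deriv φ u ^ 2 * H u ^ 3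
        + 12 * exp (φ u) * H u ^ 4 * deriv φ u + 9 * exp (φ u) ^ 2 * H u ^ 7) := by
  have hH := hsys.hasDerivAt_H hu
  have hφ := hsys.hasDerivAt_φ hu
  have hφ' := hsys.hasDerivAt_deriv_φ hu
  have hC := (((hH.pow 2).const_mul 3).sub (((hφ.exp.const_mul 3).mul hφ').mul (hH.pow 3))).sub
    ((hφ'.pow 2).div_const 2)
  have hC0 : HasDerivAt (fun v => 3 * H v ^ 2 - 3 * exp (φ v) * deriv φ v * H v ^ 3
      - deriv φ v ^ 2 / 2) 0 u := by
    refine (hasDerivAt_const u 0).congr_of_eventuallyEq ?_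
    filter_upwards [hu] with v hv
    rw [hsys.2.2.1 v hv, sub_self]
  have hzero := hC.unique hC0
  rw [hsys.2.2.2 u (mem_of_mem_nhds hu)] at hzero
  simp only [Pi.pow_apply, Pi.mul_apply, Nat.cast_ofNat] at hzero
  linear_combination hzero

lemma stays_on_neg_branch (hsys : EdGB H φ (Ico 0 c)) (hdata : NegBranchData H φ β)
    (htc : t < c) (hpos : ∀ u ∈ Icc 0 t, 0 < H u) (hu : u ∈ Icc 0 t) :
    deriv φ u + 3 * exp (φ u) * H u ^ 3 < 0 := by
  obtain ⟨hβ, -, hH0, hφ0, hφ'0⟩ := hdata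
  have hsub : Icc 0 t ⊆ Ico 0 c := Icc_subset_Ico_right htc
  have hneg0 : deriv φ 0 + 3 * exp (φ 0) * H 0 ^ 3 < 0 := by
    have : 0 < √(9 * β ^ 6 + 6 * β ^ 2) := sqrt_pos.2 (by positivity)
    rw [hφ'0, hφ0, hH0, exp_zero]
    linarith
  have hφ'0_ne : deriv φ 0 ≠ 0 := by
    rw [hφ0, hH0, exp_zero] at hneg0
    nlinarith [pow_pos hβ 3]
  -- `φ` is only known to be `C²` on `[0, c)`, but `φ'(0) ≠ 0` forces differentiability at `0`.
  have hdiff : ∀ x ∈ Ico 0 c, DifferentiableAt ℝ φ x := by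
    intro x hx
    rcases hx.1.eq_or_lt with rfl | hx0
    · exact differentiableAt_of_deriv_ne_zero hφ'0_ne
    · exact (hsys.hasDerivAt_φ (Ico_mem_nhds hx0 hx.2)).differentiableAt
  have hcont : ContinuousOn (fun u => deriv φ u + 3 * exp (φ u) * H u ^ 3) (Icc 0 t) :=
    ((continuousOn_deriv_of_contDiffOn (hsys.2.1.of_le (by norm_num)) (uniqueDiffOn_Ico 0 c)
      hdiff).add (continuousOn_const.mul hsys.2.1.continuousOn.rexp |>.mul
        (hsys.1.continuousOn.pow 3))).mono hsub
  have hne : ∀ u ∈ Icc 0 t, deriv φ u + 3 * exp (φ u) * H u ^ 3 ≠ 0 := by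
    intro u hu hzero
    have hcon := hsys.2.2.1 u (hsub hu)
    rw [show deriv φ u = -3 * exp (φ u) * H u ^ 3 by linarith] at hcon
    nlinarith [pow_pos (hpos u hu) 2, sq_nonneg (exp (φ u) * H u ^ 3)]
  by_contra! hnonneg
  obtain ⟨z, hz, hz0⟩ := isPreconnected_Icc.intermediate_value (left_mem_Icc.2 (hu.1.trans hu.2))
    hu hcont ⟨hneg0.le, hnonneg⟩
  exact hne z hz hz0

lemma deriv_φ_bounds (hsys : EdGB H φ (Ico 0 c)) (hdata : NegBranchData H φ β)
    (htc : t < c) (hpos : ∀ u ∈ Icc 0 t, 0 < H u) (hu : u ∈ Icc 0 t) :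
    -6 * exp (φ u) * H u ^ 3 - √6 * H u < deriv φ u ∧ deriv φ u < -6 * exp (φ u) * H u ^ 3 :=
  neg_root_bounds (exp_pos _) (hpos u hu) (hsys.2.2.1 u (Icc_subset_Ico_right htc hu))
    (hsys.stays_on_neg_branch hdata htc hpos hu)

lemma φ_nonpos (hsys : EdGB H φ (Ico 0 c)) (hdata : NegBranchData H φ β)
    (htc : t < c) (hpos : ∀ u ∈ Icc 0 t, 0 < H u) (hu : u ∈ Icc 0 t) : φ u ≤ 0 := by
  have hanti : MonotoneOn (fun u => -φ u) (Icc 0 t) :=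
    monotoneOn_Icc_of_hasDerivAt_nonneg
      (hsys.2.1.continuousOn.mono (Icc_subset_Ico_right htc)).neg
      (fun u hu => (hsys.hasDerivAt_φ (Ico_mem_nhds hu.1 (hu.2.trans htc))).neg)
      fun u hu => by
        have := (hsys.deriv_φ_bounds hdata htc hpos (Ioo_subset_Icc_self hu)).2
        have := hpos u (Ioo_subset_Icc_self hu)
        have : 0 < exp (φ u) * H u ^ 3 := by positivity
        linarith
  have := hanti (left_mem_Icc.2 (hu.1.trans hu.2)) hu hu.1
  linarith [hdata.2.2.2.1]

lemma deriv_H_bounds (hsys : EdGB H φ (Ico 0 c)) (hdata : NegBranchData H φ β)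
    (htc : t < c) (hgood : ∀ u ∈ Icc 0 t, 0 < H u ∧ exp (φ u) * H u ^ 2 ≤ 1 / 6)
    (hu : u ∈ Ioo 0 t) : -4 * H u ^ 2 ≤ deriv H u ∧ deriv H u ≤ -(3 / 2) * H u ^ 2 := by
  have hpos : ∀ u ∈ Icc 0 t, 0 < H u := fun u hu => (hgood u hu).1
  have hu' := Ioo_subset_Icc_self hu
  obtain ⟨hlower, hupper⟩ := hsys.deriv_φ_bounds hdata htc hpos hu'
  exact bounds_of_differentiated_constraint (hpos u hu') (exp_pos _) (hgood u hu').2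
    (hsys.2.2.1 u (Icc_subset_Ico_right htc hu')) hlower hupper
    (hsys.deriv_H_mul_eq (Ico_mem_nhds hu.1 (hu.2.trans htc)))

lemma inv_H_bounds (hsys : EdGB H φ (Ico 0 c)) (hdata : NegBranchData H φ β)
    (htc : t < c) (hgood : ∀ u ∈ Icc 0 t, 0 < H u ∧ exp (φ u) * H u ^ 2 ≤ 1 / 6)
    (hu : u ∈ Icc 0 t) : β⁻¹ + 3 / 2 * u ≤ (H u)⁻¹ ∧ (H u)⁻¹ ≤ β⁻¹ + 4 * u := by
  have hsub : Icc 0 u ⊆ Icc 0 t := Icc_subset_Icc_right hu.2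
  have hcont : ContinuousOn H (Icc 0 u) :=
    hsys.1.continuousOn.mono (hsub.trans (Icc_subset_Ico_right htc))
  have hpos : ∀ v ∈ Icc 0 u, 0 < H v := fun v hv => (hgood v (hsub hv)).1
  have hderiv : ∀ v ∈ Ioo 0 u, HasDerivAt H (deriv H v) v := fun v hv =>
    hsys.hasDerivAt_H (Ico_mem_nhds hv.1 ((hv.2.trans_le hu.2).trans htc))
  have hbounds : ∀ v ∈ Ioo 0 u, -4 * H v ^ 2 ≤ deriv H v ∧ deriv H v ≤ -(3 / 2) * H v ^ 2 :=
    fun v hv => hsys.deriv_H_bounds hdata htc hgood ⟨hv.1, hv.2.trans_le hu.2⟩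
  have h1 := inv_add_le_inv_of_deriv_le_neg_mul_sq hu.1 hcont hpos hderiv
    fun v hv => (hbounds v hv).2
  have h2 := inv_le_inv_add_of_neg_mul_sq_le_deriv hu.1 hcont hpos hderiv
    fun v hv => (hbounds v hv).1
  rw [hdata.2.2.1, sub_zero] at h1 h2
  exact ⟨h1, h2⟩

lemma H_pos_and_exp_φ_mul_H_sq_le (hsys : EdGB H φ (Ico 0 c)) (hdata : NegBranchData H φ β)
    (ht0 : 0 ≤ t) (htc : t < c) :
    ∀ u ∈ Icc 0 t, 0 < H u ∧ exp (φ u) * H u ^ 2 ≤ 1 / 6 := by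
  have ⟨hβ, hβ6, hH0, hφ0, _⟩ := hdata
  have hβ2 := sq_lt_one_sixth hβ hβ6
  set m := (β⁻¹ + 4 * t)⁻¹
  have hm : 0 < m := by positivity
  have hmβ : m ≤ β := by
    rw [inv_le_comm₀ (by positivity) hβ]
    linarith
  -- `(H, e^φH²)` cannot leave the open box `(m/2, ∞) × (-∞, 1/6)`: while inside it, the a priori
  -- estimates confine it to the closed box `[m, ∞) × (-∞, β²]`.
  have hmaps : MapsTo (fun u => (H u, exp (φ u) * H u ^ 2)) (Icc 0 t)
      (Ioi (m / 2) ×ˢ Iio (1 / 6)) := by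
    have hcont : ContinuousOn H (Icc 0 t) :=
      hsys.1.continuousOn.mono (Icc_subset_Ico_right htc)
    refine mapsTo_Icc_of_bootstrap (K := Ici m ×ˢ Iic (β ^ 2))
      (hcont.prodMk ((hsys.2.1.continuousOn.mono (Icc_subset_Ico_right htc)).rexp.mul
        (hcont.pow 2)))
      (isClosed_Ici.prod isClosed_Iic) (isOpen_Ioi.prod isOpen_Iio)
      (prod_mono (Ici_subset_Ioi.2 (half_lt_self hm)) (Iic_subset_Iio.2 hβ2))
      ⟨by simp only [mem_Ioi, hH0]; linarith, by simpa [hH0, hφ0] using hβ2⟩ ?_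
    intro u hu hU
    have huc : u < c := hu.2.trans_lt htc
    have hgood : ∀ v ∈ Icc 0 u, 0 < H v ∧ exp (φ v) * H v ^ 2 ≤ 1 / 6 := fun v hv =>
      ⟨(half_pos hm).trans (hU hv).1, (hU hv).2.le⟩
    have hu' : u ∈ Icc 0 u := right_mem_Icc.2 hu.1
    have hHu := (hgood u hu').1
    obtain ⟨hβH, hHm⟩ := hsys.inv_H_bounds hdata huc hgood hu'
    have hHβ : H u ≤ β := (inv_le_inv₀ hβ hHu).1 (by linarith)
    have hφu := hsys.φ_nonpos hdata huc (fun v hv => (hgood v hv).1) hu'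
    refine ⟨?_, ?_⟩
    · show m ≤ H u
      rw [inv_le_comm₀ (by positivity) hHu]
      linarith [hu.2]
    · show exp (φ u) * H u ^ 2 ≤ β ^ 2
      have : exp (φ u) ≤ 1 := exp_le_one_iff.2 hφu
      have : H u ^ 2 ≤ β ^ 2 := pow_le_pow_left₀ hHu.le hHβ 2
      nlinarith [exp_pos (φ u)]
  exact fun u hu => ⟨(half_pos hm).trans (hmaps hu).1, (hmaps hu).2.le⟩

lemma deriv_φ_mul_gt (hsys : EdGB H φ (Ico 0 c)) (hdata : NegBranchData H φ β)
    (ht0 : 0 ≤ t) (htc : t < c) (hu : u ∈ Icc 0 t) :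
    -((6 * β ^ 2 + √6) * β) < deriv φ u * ((1 / 2) * β * u + 1) := by
  have hβ := hdata.1
  have hgood := hsys.H_pos_and_exp_φ_mul_H_sq_le hdata ht0 htc
  have hpos : ∀ u ∈ Icc 0 t, 0 < H u := fun u hu => (hgood u hu).1
  have hHu := hpos u hu
  have hφ' := (hsys.deriv_φ_bounds hdata htc hpos hu).1
  have hE : exp (φ u) ≤ 1 := exp_le_one_iff.2 (hsys.φ_nonpos hdata htc hpos hu)
  have hHβ : H u * (β⁻¹ + 3 / 2 * u) ≤ 1 := by
    simpa [mul_inv_cancel₀ hHu.ne'] using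
      mul_le_mul_of_nonneg_left (hsys.inv_H_bounds hdata htc hgood hu).1 hHu.le
  have hHw : H u * ((1 / 2) * β * u + 1) ≤ β := by
    have : H u * ((1 / 2) * β * u + 1) = β * (H u * (β⁻¹ + 3 / 2 * u)) - β * H u * u := by
      field_simp; ring
    nlinarith [mul_pos hβ hHu, hu.1]
  have hsum : 6 * exp (φ u) * H u ^ 3 + √6 * H u ≤ (6 * β ^ 2 + √6) * H u := by
    have : H u ≤ β := by nlinarith [hu.1, mul_pos hHu hβ]
    have : H u ^ 2 ≤ β ^ 2 := pow_le_pow_left₀ hHu.le this 2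
    nlinarith [mul_le_mul_of_nonneg_right hE (pow_pos hHu 3).le]
  have : 0 ≤ (1 / 2) * β * u := by have := hu.1; positivity
  nlinarith [mul_le_mul_of_nonneg_left hHw (by positivity : 0 ≤ 6 * β ^ 2 + √6)]

lemma exp_neg_φ_mul_neg_deriv_gt (hsys : EdGB H φ (Ico 0 c)) (hdata : NegBranchData H φ β)
    (ht0 : 0 ≤ t) (htc : t < c) (hu : u ∈ Icc 0 t) :
    6 * ((5 * u + 1 / β) ^ 3)⁻¹ < exp (-φ u) * -deriv φ u := by
  have hβ := hdata.1
  have hgood := hsys.H_pos_and_exp_φ_mul_H_sq_le hdata ht0 htc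
  have hpos : ∀ u ∈ Icc 0 t, 0 < H u := fun u hu => (hgood u hu).1
  have hHu := hpos u hu
  have hφ' := (hsys.deriv_φ_bounds hdata htc hpos hu).2
  have hH : (5 * u + 1 / β)⁻¹ ≤ H u := by
    rw [inv_le_comm₀ (by have := hu.1; positivity) hHu]
    linarith [(hsys.inv_H_bounds hdata htc hgood hu).2, hu.1, one_div β]
  have hexp : exp (-φ u) * (6 * exp (φ u) * H u ^ 3) = 6 * H u ^ 3 := by
    rw [mul_comm 6, mul_assoc, ← mul_assoc, ← exp_add, neg_add_cancel, exp_zero, one_mul]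
  have hg : 0 < 5 * u + 1 / β := by have := hu.1; positivity
  calc 6 * ((5 * u + 1 / β) ^ 3)⁻¹ = 6 * (5 * u + 1 / β)⁻¹ ^ 3 := by rw [inv_pow]
    _ ≤ 6 * H u ^ 3 := by gcongr
    _ = exp (-φ u) * (6 * exp (φ u) * H u ^ 3) := hexp.symm
    _ < exp (-φ u) * -deriv φ u := by gcongr; linarith

lemma lower_bound (hsys : EdGB H φ (Ico 0 c)) (hdata : NegBranchData H φ β)
    (ht : 0 < t) (htc : t < c) :
    -(12 * β ^ 2 + 2 * √6) * log ((1 / 2) * β * t + 1) < φ t := by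
  have hβ := hdata.1
  have hw : ∀ u ∈ Icc 0 t, 0 < (1 / 2) * β * u + 1 := fun u hu => by
    have : 0 ≤ (1 / 2) * β * u := by have := hu.1; positivity
    linarith
  set C := 12 * β ^ 2 + 2 * √6
  have hmono : StrictMonoOn (fun u => φ u + C * log ((1 / 2) * β * u + 1)) (Icc 0 t) := by
    refine strictMonoOn_Icc_of_hasDerivAt_pos
      ((hsys.2.1.continuousOn.mono (Icc_subset_Ico_right htc)).add (continuousOn_const.mul
        (ContinuousOn.log (by fun_prop) fun u hu => (hw u hu).ne')))
      (fun u hu => (hsys.hasDerivAt_φ (Ico_mem_nhds hu.1 (hu.2.trans htc))).add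
        ((((hasDerivAt_id u).const_mul ((1 / 2) * β)).add_const 1).log
          (hw u (Ioo_subset_Icc_self hu)).ne' |>.const_mul C)) fun u hu => ?_
    have hu' := Ioo_subset_Icc_self hu
    have hC : C * ((1 / 2) * β / ((1 / 2) * β * u + 1))
        = (6 * β ^ 2 + √6) * β / ((1 / 2) * β * u + 1) := by ring
    have := (div_lt_iff₀ (hw u hu')).2 (hsys.deriv_φ_mul_gt hdata ht.le htc hu')
    simp only [id, mul_one, hC]
    rw [neg_div] at this
    linarith
  have := hmono (left_mem_Icc.2 ht.le) (right_mem_Icc.2 ht.le) ht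
  simp only [mul_zero, zero_add, log_one, add_zero, hdata.2.2.2.1] at this
  linarith

lemma upper_bound (hsys : EdGB H φ (Ico 0 c)) (hdata : NegBranchData H φ β)
    (ht : 0 < t) (htc : t < c) :
    φ t < -log (1 + (3 / 5) * (β ^ 2 - 1 / (5 * t + 1 / β) ^ 2)) := by
  have hβ := hdata.1
  have hg : ∀ u ∈ Icc 0 t, 0 < 5 * u + 1 / β := fun u hu => by have := hu.1; positivity
  have hmono : StrictMonoOn (fun u => exp (-φ u) + 3 / 5 * ((5 * u + 1 / β) ^ 2)⁻¹)
      (Icc 0 t) := by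
    refine strictMonoOn_Icc_of_hasDerivAt_pos
      ((hsys.2.1.continuousOn.mono (Icc_subset_Ico_right htc)).neg.rexp.add
        (continuousOn_const.mul (ContinuousOn.inv₀ (by fun_prop)
          fun u hu => (pow_pos (hg u hu) 2).ne')))
      (fun u hu => (hsys.hasDerivAt_φ (Ico_mem_nhds hu.1 (hu.2.trans htc))).neg.exp.add
        (((((hasDerivAt_id u).const_mul 5).add_const (1 / β)).pow 2).inv
          (pow_pos (hg u (Ioo_subset_Icc_self hu)) 2).ne' |>.const_mul (3 / 5)))
      fun u hu => ?_
    have hcube : ∀ g : ℝ, g ≠ 0 → 3 / 5 * (-(2 * g ^ (2 - 1) * (5 * 1)) / (g ^ 2) ^ 2)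
        = -(6 * (g ^ 3)⁻¹) := fun g hg => by field_simp; ring
    simp only [id, Pi.neg_apply, Pi.pow_apply, Nat.cast_ofNat,
      hcube _ (hg u (Ioo_subset_Icc_self hu)).ne']
    linarith [hsys.exp_neg_φ_mul_neg_deriv_gt hdata ht.le htc (Ioo_subset_Icc_self hu)]
  have := hmono (left_mem_Icc.2 ht.le) (right_mem_Icc.2 ht.le) ht
  simp only [mul_zero, zero_add, hdata.2.2.2.1, neg_zero, exp_zero] at this
  rw [show ((1 / β) ^ 2)⁻¹ = β ^ 2 by rw [one_div, inv_pow, inv_inv]] at this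
  have hβt : 1 / (5 * t + 1 / β) ^ 2 ≤ β ^ 2 := by
    rw [div_le_iff₀ (pow_pos (hg t (right_mem_Icc.2 ht.le)) 2), ← mul_pow]
    have : 1 ≤ β * (5 * t + 1 / β) := by
      rw [mul_add, mul_one_div_cancel hβ.ne']; nlinarith
    nlinarith
  have hlog := log_lt_log (by linarith) (show 1 + (3 / 5) * (β ^ 2 - 1 / (5 * t + 1 / β) ^ 2)
    < exp (-φ t) by rw [one_div ((5 * t + 1 / β) ^ 2)]; linarith)
  rw [log_exp] at hlog
  linarith

end EdGB

theorem stmt_12_general (b : EReal) (β : ℝ) (H φ : ℝ → ℝ)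
    (hsys : EdGB H φ {t : ℝ | 0 ≤ t ∧ (t : EReal) < b})
    (hdata : NegBranchData H φ β) :
    ∀ t : ℝ, 0 < t → (t : EReal) < b →
      -(12 * β ^ 2 + 2 * Real.sqrt 6) * Real.log ((1 / 2) * β * t + 1) < φ t
        ∧ φ t < -Real.log (1 + (3 / 5) * (β ^ 2 - 1 / (5 * t + 1 / β) ^ 2)) := by
  intro t ht htb
  obtain ⟨c, htc, hcb⟩ := EReal.lt_iff_exists_real_btwn.1 htb
  have hsys' : EdGB H φ (Ico 0 c) :=
    hsys.mono fun s hs => ⟨hs.1, (EReal.coe_lt_coe_iff.2 hs.2).trans hcb⟩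
  have htc' : t < c := EReal.coe_lt_coe_iff.1 htc
  exact ⟨hsys'.lower_bound hdata ht htc', hsys'.upper_bound hdata ht htc'⟩

/-- If `(H, φ)` solves the EdGB FLRW system on `[0, b)` (with `b ∈ (0, +∞]`) with
the negative-branch initial data with parameter `β`, then for all `t ∈ (0, b)`,
`−(12β² + 2√6)·ln((1/2)βt + 1) < φ(t) < −ln(1 + (3/5)(β² − 1/(5t + 1/β)²))`. -/
theorem stmt_12 (b : EReal) (hb : 0 < b) (β : ℝ) (H φ : ℝ → ℝ)
    (hsys : EdGB H φ {t : ℝ | 0 ≤ t ∧ (t : EReal) < b})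
    (hdata : NegBranchData H φ β) :
    ∀ t : ℝ, 0 < t → (t : EReal) < b →
      -(12 * β ^ 2 + 2 * Real.sqrt 6) * Real.log ((1 / 2) * β * t + 1) < φ t
        ∧ φ t < -Real.log (1 + (3 / 5) * (β ^ 2 - 1 / (5 * t + 1 / β) ^ 2)) :=
  stmt_12_general b β H φ hsys hdata
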